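/- Let k > 1 and let f : ℝ → ℝ be the homothety f(x) = kx. Define the metric d'(x,y) = 2|x − y| / √((1 + x²)(1 + y²)) on ℝ (obtained by stereographic projection of S¹ onto ℝ). Then d' is a metric compatible with the usual topology of ℝ, and the ℤ-action n·x = fⁿ(x) = kⁿx is not expansive with respect to d'; in particular, f is not metric-independent expansive. -/

import Mathlib

/-- An action `φ` is expansive with respect to a distance function `d`. -/
def ExpansiveWith {G X : Type*} (φ : G → X → X) (d : X → X → ℝ) : Prop :=
  ∃ c > 0, ∀ x y : X, x ≠ y → ∃ g : G, c < d (φ g x) (φ g y)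

/-- Metric-independent expansiveness: expansive with respect to every metric
compatible with the topology. -/
def MIE {G X : Type*} [tX : TopologicalSpace X] (φ : G → X → X) : Prop :=
  ∀ m : MetricSpace X, m.toUniformSpace.toTopologicalSpace = tX →
    ExpansiveWith φ (fun x y => @dist X m.toDist x y)

/-- The metric on `ℝ` obtained from the stereographic projection of `S¹` onto `ℝ`:
`d'(x,y) = 2|x − y| / √((1 + x²)(1 + y²))`. -/
noncomputable def stereoDist (x y : ℝ) : ℝ :=
  2 * |x - y| / Real.sqrt ((1 + x ^ 2) * (1 + y ^ 2))

/-!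
`stereoDist x y` is the chordal distance `‖σ x - σ y‖` between the images of `x, y` under the
inverse stereographic projection `σ : ℝ → S¹ ⊆ ℂ`. Since `σ` is a topological embedding, pulling
back the metric of `ℂ` along it gives a metric compatible with the topology of `ℝ`.

Homotheties never separate points for this metric: the pair `(1, 1 + ε)` is sent to
`(a, a (1 + ε))`, and `stereoDist a (a (1 + ε)) = 2 |a| ε / √((1 + a²)(1 + a²(1 + ε)²)) ≤ 2ε`
for every `a`, because the square root is at least `|a|`.
-/

open Topology Function

noncomputable def stereoMap (x : ℝ) : ℂ :=
  ⟨2 * x / (1 + x ^ 2), (x ^ 2 - 1) / (1 + x ^ 2)⟩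

lemma dist_stereoMap (x y : ℝ) : dist (stereoMap x) (stereoMap y) = stereoDist x y := by
  have hnormSq : Complex.normSq (stereoMap x - stereoMap y)
      = (2 * |x - y|) ^ 2 / ((1 + x ^ 2) * (1 + y ^ 2)) := by
    simp only [Complex.normSq_apply, stereoMap, Complex.sub_re, Complex.sub_im, mul_pow, sq_abs]
    field_simp
    ring
  rw [dist_eq_norm, Complex.norm_def, hnormSq, Real.sqrt_div' _ (by positivity),
    Real.sqrt_sq (by positivity), stereoDist]

lemma stereoMap_im_lt_one (x : ℝ) : (stereoMap x).im < 1 := by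
  rw [stereoMap, div_lt_one (by positivity)]
  linarith

lemma stereoMap_leftInverse :
    LeftInverse (fun z : ℂ => z.re / (1 - z.im)) stereoMap := by
  intro x
  simp only [stereoMap]
  field_simp
  ring

lemma continuous_stereoMap : Continuous stereoMap :=
  Complex.equivRealProdCLM.symm.continuous.comp
    (by fun_prop (disch := exact fun x => by positivity) :
      Continuous fun x : ℝ => (2 * x / (1 + x ^ 2), (x ^ 2 - 1) / (1 + x ^ 2)))

-- The inverse `z ↦ z.re / (1 - z.im)` is continuous only away from the pole `z.im = 1`,
-- which the image avoids.
lemma isEmbedding_stereoMap : IsEmbedding stereoMap := by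
  let U : Set ℂ := {z | z.im < 1}
  have hinv : Continuous fun z : U => (z : ℂ).re / (1 - (z : ℂ).im) :=
    (Complex.continuous_re.comp continuous_subtype_val).div
      (continuous_const.sub (Complex.continuous_im.comp continuous_subtype_val))
      fun z => by linarith [z.2.out]
  have hleft : LeftInverse (fun z : U => (z : ℂ).re / (1 - (z : ℂ).im))
      (U.codRestrict stereoMap stereoMap_im_lt_one) := fun x => stereoMap_leftInverse x
  exact IsEmbedding.subtypeVal.comp
    (hleft.isEmbedding hinv (continuous_stereoMap.codRestrict stereoMap_im_lt_one))

noncomputable abbrev stereoMetric : MetricSpace ℝ :=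
  isEmbedding_stereoMap.comapMetricSpace stereoMap

lemma stereoDist_mul_le (a y : ℝ) : stereoDist a (a * y) ≤ 2 * |1 - y| := by
  have hprod : 0 < (1 + a ^ 2) * (1 + (a * y) ^ 2) := by positivity
  have habs : |a| ≤ √((1 + a ^ 2) * (1 + (a * y) ^ 2)) :=
    Real.abs_le_sqrt (by nlinarith [sq_nonneg (a * (a * y))])
  rw [stereoDist, div_le_iff₀ (Real.sqrt_pos.2 hprod),
    show a - a * y = a * (1 - y) by ring, abs_mul]
  nlinarith [abs_nonneg (1 - y)]

lemma not_expansiveWith_mul_stereoDist {G : Type*} (s : G → ℝ) :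
    ¬ ExpansiveWith (fun g x => s g * x) stereoDist := by
  rintro ⟨c, hc, hexp⟩
  obtain ⟨g, hg⟩ := hexp 1 (1 + c / 2) (by linarith)
  have hle := stereoDist_mul_le (s g) (1 + c / 2)
  rw [show |1 - (1 + c / 2)| = c / 2 by rw [abs_sub_comm, add_sub_cancel_left, abs_of_pos (half_pos hc)]] at hle
  simp only [mul_one] at hg
  linarith

theorem homothety_not_mie (k : ℝ) :
    (∃ m : MetricSpace ℝ,
      (∀ x y : ℝ, @dist ℝ m.toDist x y = stereoDist x y) ∧
      m.toUniformSpace.toTopologicalSpace = (inferInstance : TopologicalSpace ℝ)) ∧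
    ¬ ExpansiveWith (fun (n : ℤ) (x : ℝ) => k ^ n * x) stereoDist ∧
    ¬ MIE (fun (n : ℤ) (x : ℝ) => k ^ n * x) := by
  have hdist : ∀ x y : ℝ, @dist ℝ stereoMetric.toDist x y = stereoDist x y := dist_stereoMap
  have hexp := not_expansiveWith_mul_stereoDist fun n : ℤ => k ^ n
  refine ⟨⟨stereoMetric, hdist, rfl⟩, hexp, fun hmie => hexp ?_⟩
  simpa only [hdist] using hmie stereoMetric rfl
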